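/- arXiv:math/0601335 — 3 statements merged into one kernel-verified Lean document; each statement's English description precedes it below -/
import Mathlib

section
/- Let σ = {(j_1,j_{r+1}), (j_2,j_{r+2}), …, (j_r,j_{2r})} with j_1 < j_2 < … < j_{2r} be a set of r pairwise crossing diagonals of the convex n-gon. Then the monomial ∏_{k=1}^r x_{j_k, j_{k+r}} is, with respect to the reverse lexicographic term order refining the order x_{ij} ≺ x_{kl} whenever d_{ij} < d_{kl}, the maximal monomial among all monomials of the Pfaffian of the skew-symmetric submatrix A_{j_1,…,j_{2r}} (i.e., among all perfect matchings of {j_1,…,j_{2r}}). -/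
/-!
Since `p ^ 2` is the determinant and the leading monomial of a square is twice the leading
monomial of its root, it suffices to show that twice the crossing monomial is the leading monomial
of the determinant of the skew-symmetric submatrix. The terms of the determinant belong to the
fixed-point-free permutations `π` of the `2r` indices, with monomial `∏ᵢ x_{j_i j_{π i}}`, and
twice the crossing monomial comes only from the involution `i ↦ i ± r`. For any other `π` some
crossing pair `(l, l + r)` is not swapped by `π`. The shorter of the two arcs cut out by the
diagonal `(j_l, j_{l+r})` carries `r + 1` of the `2r` indices, so by pigeonhole `π` joins two of
them by a diagonal that lies in this arc, is not in `σ`, and is strictly shorter than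
`(j_l, j_{l+r})`. As the order on the variables refines the distance, this shorter diagonal rules
out that `π`'s monomial has the smaller exponent at the first variable where the two differ.
-/


open MvPolynomial

/-- Diagonals `(i,j)`, `1 ≤ i < j ≤ n`, of the convex `n`-gon; these index the variables
`x_{ij}` of the polynomial ring. -/
abbrev Diag (n : ℕ) := {p : Fin n × Fin n // p.1 < p.2}

/-- The cyclic distance `d_{ij} = min (j - i, n + i - j)` of a diagonal. -/
def dval (n : ℕ) (e : Diag n) : ℕ :=
  min ((e.1.2 : ℕ) - (e.1.1 : ℕ)) (n + (e.1.1 : ℕ) - (e.1.2 : ℕ))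

/-- Reverse lexicographic comparison of two monomials (exponent vectors) with respect to a
linear order `vo` on the variables: `m` is smaller than `m'` iff at the `vo`-smallest
variable where they differ, `m` has the strictly larger exponent. -/
def RevLexLT {σ : Type*} (vo : σ → σ → Prop) (m m' : σ →₀ ℕ) : Prop :=
  ∃ v, m' v < m v ∧ ∀ w, vo w v → m w = m' w

/-- The (degree) reverse lexicographic term order induced by `vo`: compare total degrees
first, then break ties by reverse lexicographic comparison. -/
def TermLT {σ : Type*} (vo : σ → σ → Prop) (m m' : σ →₀ ℕ) : Prop :=
  (m.sum fun _ e => e) < (m'.sum fun _ e => e) ∨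
    ((m.sum fun _ e => e) = (m'.sum fun _ e => e) ∧ RevLexLT vo m m')

open Finset

section TermOrder

variable {σ : Type*} {vo : σ → σ → Prop}

theorem termLT_iff {m m' : σ →₀ ℕ} :
    TermLT vo m m' ↔ m.degree < m'.degree ∨ m.degree = m'.degree ∧ RevLexLT vo m m' :=
  Iff.rfl

theorem RevLexLT.add_right {a b : σ →₀ ℕ} (h : RevLexLT vo a b) (c : σ →₀ ℕ) :
    RevLexLT vo (a + c) (b + c) := by
  obtain ⟨v, hv, heq⟩ := h
  exact ⟨v, by simpa using hv, fun w hw => by simp [heq w hw]⟩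

theorem TermLT.add_right {a b : σ →₀ ℕ} (h : TermLT vo a b) (c : σ →₀ ℕ) :
    TermLT vo (a + c) (b + c) := by
  simp only [termLT_iff, map_add] at h ⊢
  rcases h with h | ⟨h, hr⟩
  · exact .inl (by omega)
  · exact .inr ⟨by omega, hr.add_right c⟩

theorem TermLT.add_left {a b : σ →₀ ℕ} (h : TermLT vo a b) (c : σ →₀ ℕ) :
    TermLT vo (c + a) (c + b) := by
  simpa only [add_comm c] using h.add_right c

variable (vo) in
theorem Finsupp.exists_minimal_ne [IsStrictOrder σ vo] {m m' : σ →₀ ℕ} (h : m ≠ m') :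
    ∃ v, m v ≠ m' v ∧ ∀ w, vo w v → m w = m' w := by
  classical
  obtain ⟨v, hv⟩ := Finsupp.nonempty_neLocus_iff.2 h
  obtain ⟨⟨v₀, hv₀⟩, -, hmin⟩ :=
    ((m.neLocus m').wellFoundedOn (r := vo)).has_min Set.univ ⟨⟨v, hv⟩, trivial⟩
  exact ⟨v₀, Finsupp.mem_neLocus.1 hv₀, fun w hw =>
    by_contra fun hne => hmin ⟨w, Finsupp.mem_neLocus.2 hne⟩ trivial hw⟩

variable [IsStrictTotalOrder σ vo]

theorem RevLexLT.trans {a b c : σ →₀ ℕ} (h₁ : RevLexLT vo a b) (h₂ : RevLexLT vo b c) :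
    RevLexLT vo a c := by
  obtain ⟨v₁, hv₁, heq₁⟩ := h₁
  obtain ⟨v₂, hv₂, heq₂⟩ := h₂
  rcases trichotomous_of vo v₁ v₂ with h | rfl | h
  · exact ⟨v₁, heq₂ v₁ h ▸ hv₁, fun w hw => (heq₁ w hw).trans (heq₂ w (_root_.trans hw h))⟩
  · exact ⟨v₁, hv₂.trans hv₁, fun w hw => (heq₁ w hw).trans (heq₂ w hw)⟩
  · exact ⟨v₂, heq₁ v₂ h ▸ hv₂, fun w hw => (heq₁ w (_root_.trans hw h)).trans (heq₂ w hw)⟩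

variable (vo) in
theorem revLexLT_trichotomous (a b : σ →₀ ℕ) : RevLexLT vo a b ∨ a = b ∨ RevLexLT vo b a := by
  by_cases hab : a = b
  · exact .inr (.inl hab)
  obtain ⟨v, hv, heq⟩ := Finsupp.exists_minimal_ne vo hab
  rcases hv.lt_or_gt with h | h
  · exact .inr (.inr ⟨v, h, fun w hw => (heq w hw).symm⟩)
  · exact .inl ⟨v, h, heq⟩

instance : IsStrictTotalOrder (σ →₀ ℕ) (TermLT vo) where
  irrefl a := by rintro (h | ⟨-, v, hv, -⟩) <;> exact lt_irrefl _ ‹_›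
  trans a b c := by
    simp only [termLT_iff]
    rintro (h₁ | ⟨h₁, hr₁⟩) (h₂ | ⟨h₂, hr₂⟩)
    · exact .inl (h₁.trans h₂)
    · exact .inl (h₂ ▸ h₁)
    · exact .inl (h₁ ▸ h₂)
    · exact .inr ⟨h₁.trans h₂, hr₁.trans hr₂⟩
  trichotomous a b := by
    simp only [termLT_iff]
    rcases lt_trichotomy a.degree b.degree with h | h | h
    · tauto
    · rcases revLexLT_trichotomous vo a b with h' | h' | h' <;> tauto
    · tauto

theorem termLT_add_add_of_ne {a b μ ν : σ →₀ ℕ} (ha : a ≠ μ → TermLT vo a μ)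
    (hb : b ≠ ν → TermLT vo b ν) (hne : (a, b) ≠ (μ, ν)) : TermLT vo (a + b) (μ + ν) := by
  by_cases haμ : a = μ
  · subst haμ
    exact (hb fun h => hne (by rw [h])).add_left a
  · have h₁ := (ha haμ).add_right b
    by_cases hbν : b = ν
    · exact hbν ▸ h₁
    · exact _root_.trans h₁ ((hb hbν).add_left μ)

end TermOrder

section LeadingMonomial

variable {σ R : Type*} [CommSemiring R] (vo : σ → σ → Prop)

def IsLeadingMonomial (p : MvPolynomial σ R) (μ : σ →₀ ℕ) : Prop :=
  μ ∈ p.support ∧ ∀ m ∈ p.support, m ≠ μ → TermLT vo m μ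

variable {vo} [IsStrictTotalOrder σ vo] {p q : MvPolynomial σ R} {μ ν : σ →₀ ℕ}

theorem IsLeadingMonomial.eq (hμ : IsLeadingMonomial vo p μ) (hν : IsLeadingMonomial vo p ν) :
    μ = ν :=
  by_contra fun h => asymm (hν.2 μ hμ.1 h) (hμ.2 ν hν.1 (Ne.symm h))

variable (vo) in
theorem exists_isLeadingMonomial (hp : p ≠ 0) : ∃ μ, IsLeadingMonomial vo p μ := by
  classical
  let _ : LinearOrder (σ →₀ ℕ) := linearOrderOfSTO (TermLT vo)
  have hne : p.support.Nonempty := support_nonempty.2 hp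
  refine ⟨p.support.max' hne, p.support.max'_mem hne, fun m hm hm' => ?_⟩
  exact (p.support.le_max' m hm).resolve_left hm'

theorem IsLeadingMonomial.mul [NoZeroDivisors R] (hp : IsLeadingMonomial vo p μ)
    (hq : IsLeadingMonomial vo q ν) : IsLeadingMonomial vo (p * q) (μ + ν) := by
  classical
  have hlt : ∀ a ∈ p.support, ∀ b ∈ q.support, (a, b) ≠ (μ, ν) → TermLT vo (a + b) (μ + ν) :=
    fun a ha b hb => termLT_add_add_of_ne (hp.2 a ha) (hq.2 b hb)
  have hcoeff : coeff (μ + ν) (p * q) = coeff μ p * coeff ν q := by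
    rw [coeff_mul, Finset.sum_eq_single (μ, ν)]
    · rintro ⟨a, b⟩ hab hne
      rw [HasAntidiagonal.mem_antidiagonal] at hab
      by_contra h
      exact irrefl _ (hab ▸ hlt a (mem_support_iff.2 (left_ne_zero_of_mul h))
        b (mem_support_iff.2 (right_ne_zero_of_mul h)) hne)
    · simp
  refine ⟨mem_support_iff.2 (hcoeff ▸ mul_ne_zero (mem_support_iff.1 hp.1)
    (mem_support_iff.1 hq.1)), fun m hm hne => ?_⟩
  obtain ⟨a, ha, b, hb, rfl⟩ := Finset.mem_add.1 (support_mul p q hm)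
  exact hlt a ha b hb fun h => hne (by simp_all)

theorem IsLeadingMonomial.of_sq [NoZeroDivisors R] (h : IsLeadingMonomial vo (p ^ 2) (μ + μ)) :
    IsLeadingMonomial vo p μ := by
  have hp : p ≠ 0 := by
    rintro rfl
    simp [IsLeadingMonomial] at h
  obtain ⟨ν, hν⟩ := exists_isLeadingMonomial vo hp
  have hνμ : ν + ν = μ + μ := (sq p ▸ hν.mul hν).eq h
  obtain rfl : ν = μ := by
    ext v
    have := DFunLike.congr_fun hνμ v
    simp only [Finsupp.add_apply] at this
    omega
  exact hν

end LeadingMonomial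

section Determinant

variable {σ R ι : Type*} [DecidableEq σ] [CommRing R] [Fintype ι] [DecidableEq ι]

theorem coeff_det_of_eq_C_mul_monomial {M : Matrix ι ι (MvPolynomial σ R)} (c : ι → ι → R)
    (m : ι → ι → σ →₀ ℕ) (hM : ∀ i i', M i i' = C (c i i') * monomial (m i i') 1)
    (μ : σ →₀ ℕ) :
    coeff μ M.det = ∑ π : Equiv.Perm ι,
      if ∑ i, m (π i) i = μ then (Equiv.Perm.sign π : R) * ∏ i, c (π i) i else 0 := by
  simp only [Matrix.det_apply, hM, prod_mul_distrib, ← map_prod, ← monomial_sum_one, coeff_sum,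
    Units.smul_def, coeff_smul, coeff_C_mul, coeff_monomial]
  refine sum_congr rfl fun π _ => ?_
  split_ifs <;> simp [zsmul_eq_mul]

end Determinant

section Polygon

variable {n : ℕ}

noncomputable def edgeMonomial (a b : Fin n) : Diag n →₀ ℕ :=
  if h : a < b then Finsupp.single ⟨(a, b), h⟩ 1
  else if h' : b < a then Finsupp.single ⟨(b, a), h'⟩ 1 else 0

def edgeSign (R : Type*) [Ring R] (a b : Fin n) : R :=
  if a < b then 1 else if b < a then -1 else 0

theorem edgeMonomial_of_lt {a b : Fin n} (h : a < b) :
    edgeMonomial a b = Finsupp.single ⟨(a, b), h⟩ 1 :=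
  dif_pos h

theorem edgeMonomial_comm (a b : Fin n) : edgeMonomial a b = edgeMonomial b a := by
  rcases lt_trichotomy a b with h | rfl | h
  · rw [edgeMonomial_of_lt h, edgeMonomial, dif_neg h.not_gt, dif_pos h]
  · rfl
  · rw [edgeMonomial_of_lt h, edgeMonomial, dif_neg h.not_gt, dif_pos h]

theorem edgeMonomial_apply_of_lt {a b : Fin n} (h : a < b) :
    edgeMonomial a b ⟨(a, b), h⟩ = 1 := by
  rw [edgeMonomial_of_lt h, Finsupp.single_eq_same]

theorem edgeMonomial_apply_of_gt {a b : Fin n} (h : a < b) :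
    edgeMonomial b a ⟨(a, b), h⟩ = 1 := by
  rw [edgeMonomial_comm, edgeMonomial_apply_of_lt]

theorem degree_edgeMonomial {a b : Fin n} (h : a ≠ b) : (edgeMonomial a b).degree = 1 := by
  rcases h.lt_or_gt with h | h
  · simp [edgeMonomial_of_lt h]
  · simp [edgeMonomial_comm a b, edgeMonomial_of_lt h]

theorem isUnit_edgeSign (R : Type*) [Ring R] {a b : Fin n} (h : a ≠ b) :
    IsUnit (edgeSign R a b) := by
  rcases h.lt_or_gt with h | h <;> simp [edgeSign, h, h.not_gt]

theorem edgeSign_self (R : Type*) [Ring R] (a : Fin n) : edgeSign R a a = 0 := by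
  simp [edgeSign]

theorem dite_X_eq_C_edgeSign_mul (R : Type*) [CommRing R] (a b : Fin n) :
    (if h : a < b then X ⟨(a, b), h⟩ else if h' : b < a then -X ⟨(b, a), h'⟩ else 0 :
      MvPolynomial (Diag n) R) = C (edgeSign R a b) * monomial (edgeMonomial a b) 1 := by
  unfold edgeSign edgeMonomial
  split_ifs <;> simp [X]

end Polygon

theorem Equiv.Perm.exists_edge_mem_of_card_lt {α : Type*} [Fintype α] [LinearOrder α]
    (π : Equiv.Perm α) (hπ : ∀ i, π i ≠ i) {W : Finset α}
    (hW : Fintype.card α + 1 < 2 * #W) {a₀ b₀ : α} (hswap : ¬(π a₀ = b₀ ∧ π b₀ = a₀)) :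
    ∃ a ∈ W, ∃ b ∈ W, a < b ∧ (π a = b ∨ π b = a) ∧ (a, b) ≠ (a₀, b₀) := by
  classical
  set V := W.map π.symm.toEmbedding
  have hV : ∀ i, i ∈ V ↔ π i ∈ W := by simp [V, Finset.mem_map_equiv]
  have hWV : 1 < #(W ∩ V) := by
    have := card_union_add_card_inter W V
    have := card_le_univ (W ∪ V)
    have : #V = #W := card_map _
    omega
  -- if `{x, π x} = {y, π y} = {a₀, b₀}` with `x ≠ y`, then `π` swaps `a₀` and `b₀`
  have hgood : ∃ i ∈ W ∩ V, s(i, π i) ≠ s(a₀, b₀) := by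
    obtain ⟨x, hx, y, hy, hxy⟩ := one_lt_card.1 hWV
    by_contra! hbad
    have hx' := Sym2.eq_iff.1 (hbad x hx)
    have hy' := Sym2.eq_iff.1 (hbad y hy)
    grind
  obtain ⟨i, hi, hne⟩ := hgood
  rw [mem_inter, hV] at hi
  rcases (hπ i).lt_or_gt with h | h
  · refine ⟨π i, hi.2, i, hi.1, h, .inr rfl, fun h' => hne ?_⟩
    obtain ⟨rfl, rfl⟩ := Prod.ext_iff.1 h'
    exact Sym2.eq_swap
  · refine ⟨i, hi.1, π i, hi.2, h, .inl rfl, fun h' => hne ?_⟩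
    obtain ⟨rfl, rfl⟩ := Prod.ext_iff.1 h'
    rfl

section Arc

variable {n N : ℕ} {j : Fin N → Fin n}

def shortArc (j : Fin N → Fin n) (a b : Fin N) : Finset (Fin N) :=
  if (j b : ℕ) - j a ≤ n + j a - j b then Icc a b else Iic a ∪ Ici b

theorem dval_lt_of_mem_shortArc (hj : StrictMono j) {a₀ b₀ a b : Fin N} (h₀ : a₀ < b₀)
    (h : a < b) (ha : a ∈ shortArc j a₀ b₀) (hb : b ∈ shortArc j a₀ b₀)
    (hne : (a, b) ≠ (a₀, b₀)) :
    dval n ⟨(j a, j b), hj h⟩ < dval n ⟨(j a₀, j b₀), hj h₀⟩ := by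
  have hle : ∀ {x y : Fin N}, x ≤ y → (j x : ℕ) ≤ j y := fun h => hj.monotone h
  have hend : (j a₀ : ℕ) ≠ j a ∨ (j b : ℕ) ≠ j b₀ := by
    by_contra! hc
    obtain ⟨rfl, rfl⟩ : a₀ = a ∧ b = b₀ := ⟨hj.injective (Fin.ext hc.1), hj.injective (Fin.ext hc.2)⟩
    exact hne rfl
  have : (j a : ℕ) < j b := hj h
  have : (j a₀ : ℕ) < j b₀ := hj h₀
  have := (j b).isLt
  have := (j b₀).isLt
  unfold shortArc at ha hb
  simp only [dval]
  split_ifs at ha hb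
  · simp only [mem_Icc] at ha hb
    have := hle ha.1
    have := hle hb.2
    omega
  · simp only [mem_union, mem_Iic, mem_Ici] at ha hb
    rcases ha with ha | ha <;> rcases hb with hb | hb <;>
      have := hle ha <;> have := hle hb <;> omega

end Arc

section Crossing

variable {n r : ℕ}

theorem Fin.castAdd_lt_natAdd {r : ℕ} (l : Fin r) : Fin.castAdd r l < Fin.natAdd r l := by
  simpa [Fin.lt_def] using l.pos

theorem card_shortArc_crossing (j : Fin (r + r) → Fin n) (l : Fin r) :
    #(shortArc j (Fin.castAdd r l) (Fin.natAdd r l)) = r + 1 := by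
  unfold shortArc
  split_ifs
  · simp only [Fin.card_Icc, Fin.val_castAdd, Fin.val_natAdd]
    omega
  · rw [card_union_of_disjoint]
    · simp only [Fin.card_Iic, Fin.card_Ici, Fin.val_castAdd, Fin.val_natAdd]
      omega
    · exact disjoint_left.2 fun x hx hx' =>
        (Fin.castAdd_lt_natAdd l).not_ge ((mem_Ici.1 hx').trans (mem_Iic.1 hx))

theorem eq_of_crossing_mem_shortArc {j : Fin (r + r) → Fin n} {l l' : Fin r}
    (h : Fin.castAdd r l' ∈ shortArc j (Fin.castAdd r l) (Fin.natAdd r l))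
    (h' : Fin.natAdd r l' ∈ shortArc j (Fin.castAdd r l) (Fin.natAdd r l)) : l' = l := by
  unfold shortArc at h h'
  split_ifs at h h' <;>
    simp only [mem_Icc, mem_union, mem_Iic, mem_Ici, Fin.le_def, Fin.val_castAdd,
      Fin.val_natAdd] at h h' <;>
    exact Fin.ext (by omega)

def crossingDiag {j : Fin (r + r) → Fin n} (hj : StrictMono j) (l : Fin r) : Diag n :=
  ⟨(j (Fin.castAdd r l), j (Fin.natAdd r l)), hj (Fin.castAdd_lt_natAdd l)⟩

noncomputable def crossingMonomial {j : Fin (r + r) → Fin n} (hj : StrictMono j) :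
    Diag n →₀ ℕ :=
  ∑ l, Finsupp.single (crossingDiag hj l) 1

def crossingSwap (r : ℕ) : Equiv.Perm (Fin (r + r)) :=
  finSumFinEquiv.permCongr (Equiv.sumComm (Fin r) (Fin r))

@[simp]
theorem crossingSwap_castAdd (l : Fin r) : crossingSwap r (Fin.castAdd r l) = Fin.natAdd r l := by
  simp only [crossingSwap, Equiv.permCongr_apply, finSumFinEquiv_symm_apply_castAdd,
    Equiv.sumComm_apply, Sum.swap_inl, finSumFinEquiv_apply_right]

@[simp]
theorem crossingSwap_natAdd (l : Fin r) : crossingSwap r (Fin.natAdd r l) = Fin.castAdd r l := by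
  simp only [crossingSwap, Equiv.permCongr_apply, finSumFinEquiv_symm_apply_natAdd,
    Equiv.sumComm_apply, Sum.swap_inr, finSumFinEquiv_apply_left]

theorem eq_crossingSwap_of_forall {π : Equiv.Perm (Fin (r + r))}
    (h : ∀ l, π (Fin.castAdd r l) = Fin.natAdd r l ∧ π (Fin.natAdd r l) = Fin.castAdd r l) :
    π = crossingSwap r := by
  ext i : 1
  induction i using Fin.addCases with
  | left l => rw [(h l).1, crossingSwap_castAdd]
  | right l => rw [(h l).2, crossingSwap_natAdd]

theorem crossingSwap_apply_ne (i : Fin (r + r)) : crossingSwap r i ≠ i := by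
  induction i using Fin.addCases with
  | left l => rw [crossingSwap_castAdd]; exact (Fin.castAdd_lt_natAdd l).ne'
  | right l => rw [crossingSwap_natAdd]; exact (Fin.castAdd_lt_natAdd l).ne

noncomputable def permMonomial {ι : Type*} [Fintype ι] (j : ι → Fin n) (π : Equiv.Perm ι) :
    Diag n →₀ ℕ :=
  ∑ i, edgeMonomial (j (π i)) (j i)

theorem degree_permMonomial {ι : Type*} [Fintype ι] {j : ι → Fin n}
    (hj : Function.Injective j) {π : Equiv.Perm ι} (hπ : ∀ i, π i ≠ i) :
    (permMonomial j π).degree = Fintype.card ι := by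
  simp [permMonomial, degree_edgeMonomial (hj.ne (hπ _))]

theorem sum_edgeMonomial_apply_le_permMonomial_apply {ι : Type*} [Fintype ι] (j : ι → Fin n)
    (π : Equiv.Perm ι) (s : Finset ι) (t : Diag n) :
    ∑ i ∈ s, edgeMonomial (j (π i)) (j i) t ≤ permMonomial j π t := by
  simpa only [permMonomial, Finsupp.finsetSum_apply] using sum_le_sum_of_subset (subset_univ s)

theorem one_le_permMonomial_apply {ι : Type*} [Fintype ι] [LinearOrder ι] {j : ι → Fin n}
    (hj : StrictMono j) {π : Equiv.Perm ι} {a b : ι} (hab : a < b) (h : π a = b ∨ π b = a) :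
    1 ≤ permMonomial j π ⟨(j a, j b), hj hab⟩ := by
  rcases h with h | h
  · simpa only [sum_singleton, h, edgeMonomial_apply_of_gt] using
      sum_edgeMonomial_apply_le_permMonomial_apply j π {a} ⟨(j a, j b), hj hab⟩
  · simpa only [sum_singleton, h, edgeMonomial_apply_of_lt] using
      sum_edgeMonomial_apply_le_permMonomial_apply j π {b} ⟨(j a, j b), hj hab⟩

theorem two_le_permMonomial_apply {ι : Type*} [Fintype ι] [LinearOrder ι] {j : ι → Fin n}
    (hj : StrictMono j) {π : Equiv.Perm ι} {a b : ι} (hab : a < b) (h : π a = b ∧ π b = a) :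
    2 ≤ permMonomial j π ⟨(j a, j b), hj hab⟩ := by
  simpa only [sum_pair hab.ne, h, edgeMonomial_apply_of_gt, edgeMonomial_apply_of_lt] using
    sum_edgeMonomial_apply_le_permMonomial_apply j π {a, b} ⟨(j a, j b), hj hab⟩

variable {j : Fin (r + r) → Fin n} (hj : StrictMono j)
include hj

theorem crossingDiag_injective : Function.Injective (crossingDiag hj) := fun l l' h => by
  simpa using hj.injective (congrArg (fun t : Diag n => t.1.1) h)

theorem crossingMonomial_apply_crossingDiag (l : Fin r) :
    crossingMonomial hj (crossingDiag hj l) = 1 := by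
  simp [crossingMonomial, Finsupp.finsetSum_apply, Finsupp.single_apply,
    (crossingDiag_injective hj).eq_iff]

theorem crossingMonomial_apply_of_notMem_range {t : Diag n}
    (ht : t ∉ Set.range (crossingDiag hj)) : crossingMonomial hj t = 0 := by
  simp only [crossingMonomial, Finsupp.finsetSum_apply]
  exact sum_eq_zero fun l _ => Finsupp.single_eq_of_ne fun h => ht ⟨l, h.symm⟩

theorem degree_crossingMonomial : (crossingMonomial hj).degree = r := by
  simp [crossingMonomial]

theorem permMonomial_crossingSwap :
    permMonomial j (crossingSwap r) = crossingMonomial hj + crossingMonomial hj := by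
  have hedge : ∀ l, edgeMonomial (j (Fin.castAdd r l)) (j (Fin.natAdd r l)) =
      Finsupp.single (crossingDiag hj l) 1 := fun l => edgeMonomial_of_lt _
  simp only [permMonomial, crossingMonomial, Fin.sum_univ_add, crossingSwap_castAdd,
    crossingSwap_natAdd, edgeMonomial_comm (j (Fin.natAdd r _)), hedge]

theorem exists_diag_lt_of_not_swap {π : Equiv.Perm (Fin (r + r))} (hπ : ∀ i, π i ≠ i)
    (l : Fin r)
    (hswap : ¬(π (Fin.castAdd r l) = Fin.natAdd r l ∧ π (Fin.natAdd r l) = Fin.castAdd r l)) :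
    ∃ t : Diag n, 0 < permMonomial j π t ∧ crossingMonomial hj t = 0 ∧
      dval n t < dval n (crossingDiag hj l) := by
  have hW : Fintype.card (Fin (r + r)) + 1 <
      2 * #(shortArc j (Fin.castAdd r l) (Fin.natAdd r l)) := by
    rw [card_shortArc_crossing, Fintype.card_fin]
    omega
  obtain ⟨a, ha, b, hb, hab, hπab, hne⟩ := π.exists_edge_mem_of_card_lt hπ hW hswap
  refine ⟨⟨(j a, j b), hj hab⟩, one_le_permMonomial_apply hj hab hπab,
    crossingMonomial_apply_of_notMem_range hj ?_,
    dval_lt_of_mem_shortArc hj (Fin.castAdd_lt_natAdd l) hab ha hb hne⟩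
  rintro ⟨l', hl'⟩
  simp only [crossingDiag, Subtype.mk.injEq, Prod.mk.injEq] at hl'
  obtain ⟨rfl, rfl⟩ := And.intro (hj.injective hl'.1) (hj.injective hl'.2)
  obtain rfl := eq_of_crossing_mem_shortArc ha hb
  exact hne rfl

end Crossing

section LeadingMonomialOfDet

variable {n r : ℕ} {j : Fin (r + r) → Fin n} (hj : StrictMono j)
include hj

theorem eq_crossingSwap_of_permMonomial_eq {π : Equiv.Perm (Fin (r + r))} (hπ : ∀ i, π i ≠ i)
    (h : permMonomial j π = crossingMonomial hj + crossingMonomial hj) : π = crossingSwap r := by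
  refine eq_crossingSwap_of_forall fun l => ?_
  by_contra hswap
  obtain ⟨t, ht, htc, -⟩ := exists_diag_lt_of_not_swap hj hπ l hswap
  rw [h, Finsupp.add_apply, htc] at ht
  exact lt_irrefl 0 ht

variable {vo : Diag n → Diag n → Prop} [IsStrictTotalOrder (Diag n) vo]

theorem termLT_permMonomial (hcompat : ∀ e f : Diag n, dval n e < dval n f → vo e f)
    {π : Equiv.Perm (Fin (r + r))} (hπ : ∀ i, π i ≠ i)
    (hne : permMonomial j π ≠ crossingMonomial hj + crossingMonomial hj) :
    TermLT vo (permMonomial j π) (crossingMonomial hj + crossingMonomial hj) := by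
  refine termLT_iff.2 (.inr ⟨?_, ?_⟩)
  · rw [degree_permMonomial hj.injective hπ, map_add, degree_crossingMonomial, Fintype.card_fin]
  obtain ⟨v, hv, hmin⟩ := Finsupp.exists_minimal_ne vo hne
  refine ⟨v, hv.lt_or_gt.resolve_left fun hlt => ?_, hmin⟩
  obtain ⟨l, rfl⟩ : v ∈ Set.range (crossingDiag hj) := by
    by_contra hv'
    simp [crossingMonomial_apply_of_notMem_range hj hv'] at hlt
  rw [Finsupp.add_apply, crossingMonomial_apply_crossingDiag] at hlt
  have hswap : ¬(π (Fin.castAdd r l) = Fin.natAdd r l ∧ π (Fin.natAdd r l) = Fin.castAdd r l) :=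
    fun h => (two_le_permMonomial_apply hj (Fin.castAdd_lt_natAdd l) h).not_gt hlt
  obtain ⟨t, ht, htc, htd⟩ := exists_diag_lt_of_not_swap hj hπ l hswap
  have := hmin t (hcompat _ _ htd)
  rw [Finsupp.add_apply, htc] at this
  omega

theorem isLeadingMonomial_det {R : Type*} [CommRing R] [Nontrivial R]
    (hcompat : ∀ e f : Diag n, dval n e < dval n f → vo e f)
    (A : Matrix (Fin n) (Fin n) (MvPolynomial (Diag n) R))
    (hA : ∀ a b : Fin n, A a b =
      if h : a < b then X ⟨(a, b), h⟩ else if h' : b < a then -X ⟨(b, a), h'⟩ else 0) :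
    IsLeadingMonomial vo (A.submatrix j j).det (crossingMonomial hj + crossingMonomial hj) := by
  have hcoeff := coeff_det_of_eq_C_mul_monomial (M := A.submatrix j j)
    (fun i i' => edgeSign R (j i) (j i')) (fun i i' => edgeMonomial (j i) (j i'))
    fun i i' => by rw [Matrix.submatrix_apply, hA, dite_X_eq_C_edgeSign_mul]
  have hfix : ∀ π : Equiv.Perm (Fin (r + r)), ∏ i, edgeSign R (j (π i)) (j i) ≠ 0 →
      ∀ i, π i ≠ i := fun π h i hi =>
    h (prod_eq_zero (mem_univ i) (by rw [hi, edgeSign_self]))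
  constructor
  · rw [mem_support_iff, hcoeff, sum_eq_single (crossingSwap r)]
    · have hτ : ∑ i, edgeMonomial (j (crossingSwap r i)) (j i) =
          crossingMonomial hj + crossingMonomial hj := permMonomial_crossingSwap hj
      rw [if_pos hτ]
      refine (((Equiv.Perm.sign _).isUnit.map (Int.castRingHom R)).mul
        (IsUnit.prod_univ_iff.2 fun i => isUnit_edgeSign R ?_)).ne_zero
      exact hj.injective.ne (crossingSwap_apply_ne i)
    · intro π _ hπ
      rw [ite_eq_right_iff]
      intro h
      by_contra h'
      exact hπ (eq_crossingSwap_of_permMonomial_eq hj (hfix π (right_ne_zero_of_mul h')) h)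
    · simp
  · intro m hm hne
    rw [mem_support_iff, hcoeff] at hm
    obtain ⟨π, -, hπ⟩ := exists_ne_zero_of_sum_ne_zero hm
    rw [ne_eq, ite_eq_right_iff, not_forall] at hπ
    obtain ⟨rfl, hπ⟩ := hπ
    exact termLT_permMonomial hj hcompat (hfix π (right_ne_zero_of_mul hπ)) hne

end LeadingMonomialOfDet

theorem stmt11_general (k : Type) [Field k] (n r : ℕ)
    (vo : Diag n → Diag n → Prop) (hvo : IsStrictTotalOrder (Diag n) vo)
    (hcompat : ∀ e f : Diag n, dval n e < dval n f → vo e f)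
    (A : Matrix (Fin n) (Fin n) (MvPolynomial (Diag n) k))
    (hA : ∀ i j : Fin n, A i j =
      if h : i < j then X ⟨(i, j), h⟩
      else if h' : j < i then - X ⟨(j, i), h'⟩
      else 0)
    (j : Fin (r + r) → Fin n) (hj : StrictMono j)
    (e : Fin r → Diag n)
    (he : ∀ kk : Fin r, (e kk).1 = (j (Fin.castAdd r kk), j (Fin.natAdd r kk)))
    (p : MvPolynomial (Diag n) k) (hp : p ^ 2 = (A.submatrix j j).det)
    (mσ : Diag n →₀ ℕ) (hmσ : mσ = ∑ kk : Fin r, Finsupp.single (e kk) 1) :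
    mσ ∈ p.support ∧ ∀ m ∈ p.support, m ≠ mσ → TermLT vo m mσ := by
  obtain rfl : e = crossingDiag hj := funext fun l => Subtype.ext (he l)
  obtain rfl : mσ = crossingMonomial hj := hmσ
  exact IsLeadingMonomial.of_sq (hp ▸ isLeadingMonomial_det hj hcompat A hA)

/-- Let `σ = {(j_1,j_{r+1}), …, (j_r,j_{2r})}` with `j_1 < … < j_{2r}` be a set of `r`
pairwise crossing diagonals of the convex `n`-gon.  Then `∏_{k=1}^r x_{j_k j_{k+r}}` is,
with respect to any reverse lexicographic term order refining `x_{ij} ≺ x_{kl}` whenever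
`d_{ij} < d_{kl}`, the maximal monomial among all monomials of the Pfaffian of the
skew-symmetric submatrix `A_{j_1,…,j_{2r}}`. -/
theorem stmt11 (k : Type) [Field k] (n r : ℕ) (hr : 1 ≤ r)
    (vo : Diag n → Diag n → Prop) (hvo : IsStrictTotalOrder (Diag n) vo)
    (hcompat : ∀ e f : Diag n, dval n e < dval n f → vo e f)
    (A : Matrix (Fin n) (Fin n) (MvPolynomial (Diag n) k))
    (hA : ∀ i j : Fin n, A i j =
      if h : i < j then X ⟨(i, j), h⟩
      else if h' : j < i then - X ⟨(j, i), h'⟩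
      else 0)
    (j : Fin (r + r) → Fin n) (hj : StrictMono j)
    (e : Fin r → Diag n)
    (he : ∀ kk : Fin r, (e kk).1 = (j (Fin.castAdd r kk), j (Fin.natAdd r kk)))
    (p : MvPolynomial (Diag n) k) (hp : p ^ 2 = (A.submatrix j j).det)
    (mσ : Diag n →₀ ℕ) (hmσ : mσ = ∑ kk : Fin r, Finsupp.single (e kk) 1) :
    mσ ∈ p.support ∧ ∀ m ∈ p.support, m ≠ mσ → TermLT vo m mσ :=
  stmt11_general k n r vo hvo hcompat A hA j hj e he p hp mσ hmσ
end

section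
/- Any set of r pairwise crossing diagonals of a convex n-gon can be written as {(j_1,j_{r+1}), (j_2,j_{r+2}), …, (j_r,j_{2r})} for some j_1 < j_2 < … < j_{2r}; that is, r diagonals pairwise cross if and only if their endpoints j_1 < … < j_{2r} are distinct and the diagonals connect j_k to j_{k+r} for each k. -/
/-- Two diagonals `(a,b)` and `(c,d)` (with `a < b`, `c < d`) of a convex `n`-gon cross iff
`a < c < b < d` or `c < a < d < b`. -/
def Crosses (p q : ℕ × ℕ) : Prop :=
  (p.1 < q.1 ∧ q.1 < p.2 ∧ p.2 < q.2) ∨ (q.1 < p.1 ∧ p.1 < q.2 ∧ q.2 < p.2)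

/-- A set `σ` of diagonals of the convex `n`-gon consists of `r` pairwise crossing diagonals
if and only if it can be written as `{(j_1,j_{r+1}), (j_2,j_{r+2}), …, (j_r,j_{2r})}` for
some `j_1 < j_2 < … < j_{2r}` in `[n]`. -/
theorem stmt12 (n r : ℕ) (σ : Finset (ℕ × ℕ))
    (hσ : ∀ p ∈ σ, 1 ≤ p.1 ∧ p.1 < p.2 ∧ p.2 ≤ n) :
    (σ.card = r ∧ (σ : Set (ℕ × ℕ)).Pairwise Crosses) ↔
      ∃ j : ℕ → ℕ,
        (∀ a b, a < b → b < 2 * r → j a < j b) ∧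
        (∀ a, a < 2 * r → 1 ≤ j a ∧ j a ≤ n) ∧
        σ = (Finset.range r).image (fun kk => (j kk, j (kk + r))) := by
  constructor
  · rintro ⟨hcard, hcross⟩
    have hlt : ∀ p ∈ σ, p.1 < p.2 := fun p hp => (hσ p hp).2.1
    have hcr : ∀ p ∈ σ, ∀ q ∈ σ, p ≠ q → Crosses p q := fun p hp q hq hne =>
      hcross (Finset.mem_coe.mpr hp) (Finset.mem_coe.mpr hq) hne
    have hfstlt : ∀ p ∈ σ, ∀ q ∈ σ, p.1 < q.1 → p.2 < q.2 := by
      intro p hp q hq h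
      have hne : p ≠ q := by rintro rfl; omega
      rcases hcr p hp q hq hne with h' | h' <;> [exact h'.2.2; omega]
    have hinj : Set.InjOn Prod.fst (σ : Set (ℕ × ℕ)) := by
      intro p hp q hq h
      by_contra hne
      rcases hcr p (Finset.mem_coe.mp hp) q (Finset.mem_coe.mp hq) hne with h' | h' <;> omega
    have hinj2 : Set.InjOn Prod.snd (σ : Set (ℕ × ℕ)) := by
      intro p hp q hq h
      by_contra hne
      rcases hcr p (Finset.mem_coe.mp hp) q (Finset.mem_coe.mp hq) hne with h' | h' <;> omega
    have hlt2 : ∀ p ∈ σ, ∀ q ∈ σ, p.1 < q.2 := by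
      intro p hp q hq
      by_cases hne : p = q
      · subst hne; exact hlt p hp
      · rcases hcr p hp q hq hne with h' | h' <;> omega
    have hF : (σ.image Prod.fst).card = r := by
      rw [Finset.card_image_of_injOn hinj, hcard]
    have hS : (σ.image Prod.snd).card = r := by
      rw [Finset.card_image_of_injOn hinj2, hcard]
    have hP : ∀ k : Fin r, ∃ p, p ∈ σ ∧ p.1 = (σ.image Prod.fst).orderEmbOfFin hF k := by
      intro k
      have hm := Finset.orderEmbOfFin_mem (σ.image Prod.fst) hF k
      obtain ⟨p, hp, hpe⟩ := Finset.mem_image.mp hm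
      exact ⟨p, hp, hpe⟩
    choose P hPmem hPfst using hP
    have hsnd : (fun k => (P k).2) = ⇑((σ.image Prod.snd).orderEmbOfFin hS) := by
      apply Finset.orderEmbOfFin_unique hS
      · intro k; exact Finset.mem_image.mpr ⟨P k, hPmem k, rfl⟩
      · intro k l hkl
        apply hfstlt _ (hPmem k) _ (hPmem l)
        rw [hPfst, hPfst]
        exact ((σ.image Prod.fst).orderEmbOfFin hF).strictMono hkl
    have hFS : ∀ k l : Fin r,
        (σ.image Prod.fst).orderEmbOfFin hF k < (σ.image Prod.snd).orderEmbOfFin hS l := by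
      intro k l
      rw [← hPfst k, ← congrFun hsnd l]
      exact hlt2 _ (hPmem k) _ (hPmem l)
    refine ⟨fun a => if h : a < r then (σ.image Prod.fst).orderEmbOfFin hF ⟨a, h⟩ else
        if h2 : a - r < r then (σ.image Prod.snd).orderEmbOfFin hS ⟨a - r, h2⟩ else 0, ?_, ?_, ?_⟩
    · intro a b hab hb2
      beta_reduce
      by_cases ha : a < r <;> by_cases hb : b < r
      · rw [dif_pos ha, dif_pos hb]
        exact ((σ.image Prod.fst).orderEmbOfFin hF).strictMono (by simpa using hab)
      · rw [dif_pos ha, dif_neg hb, dif_pos (show b - r < r by omega)]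
        exact hFS _ _
      · omega
      · rw [dif_neg ha, dif_neg hb, dif_pos (show a - r < r by omega),
          dif_pos (show b - r < r by omega)]
        exact ((σ.image Prod.snd).orderEmbOfFin hS).strictMono (by simp; omega)
    · intro a ha
      beta_reduce
      by_cases h : a < r
      · rw [dif_pos h]
        have hm := Finset.orderEmbOfFin_mem (σ.image Prod.fst) hF ⟨a, h⟩
        obtain ⟨p, hp, hpe⟩ := Finset.mem_image.mp hm
        have := hσ p hp
        omega
      · rw [dif_neg h, dif_pos (show a - r < r by omega)]
        have hm := Finset.orderEmbOfFin_mem (σ.image Prod.snd) hS ⟨a - r, by omega⟩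
        obtain ⟨p, hp, hpe⟩ := Finset.mem_image.mp hm
        have := hσ p hp
        omega
    · ext p
      simp only [Finset.mem_image, Finset.mem_range]
      constructor
      · intro hp
        have hmF : p.1 ∈ ((σ.image Prod.fst : Finset ℕ) : Set ℕ) := by
          exact_mod_cast Finset.mem_image_of_mem _ hp
        rw [← Finset.range_orderEmbOfFin (σ.image Prod.fst) hF] at hmF
        obtain ⟨k, hk⟩ := hmF
        have hPk : P k = p := hinj (Finset.mem_coe.mpr (hPmem k)) (Finset.mem_coe.mpr hp)
          ((hPfst k).trans hk)
        refine ⟨k.1, k.2, ?_⟩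
        rw [dif_pos k.2, dif_neg (show ¬ k.1 + r < r by omega),
          dif_pos (show k.1 + r - r < r by omega)]
        have h1 : (⟨k.1, k.2⟩ : Fin r) = k := rfl
        have h2 : (⟨k.1 + r - r, by omega⟩ : Fin r) = k := by
          apply Fin.ext; simp
        rw [h1, h2, ← hPfst k, ← congrFun hsnd k, hPk]
      · rintro ⟨k, hkr, hpe⟩
        rw [dif_pos hkr, dif_neg (show ¬ k + r < r by omega),
          dif_pos (show k + r - r < r by omega)] at hpe
        have h2 : (⟨k + r - r, by omega⟩ : Fin r) = (⟨k, hkr⟩ : Fin r) := by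
          apply Fin.ext; simp
        rw [h2, ← hPfst ⟨k, hkr⟩, ← congrFun hsnd ⟨k, hkr⟩] at hpe
        rw [← hpe]
        exact hPmem _
  · rintro ⟨j, hmono, hbd, rfl⟩
    have hinjj : ∀ a b, a < 2 * r → b < 2 * r → j a = j b → a = b := by
      intro a b ha hb hab
      rcases lt_trichotomy a b with h | h | h
      · have := hmono a b h hb; omega
      · exact h
      · have := hmono b a h ha; omega
    constructor
    · rw [Finset.card_image_of_injOn, Finset.card_range]
      intro a ha b hb hab
      simp only [Finset.mem_coe, Finset.mem_range] at ha hb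
      have := congrArg Prod.fst hab
      exact hinjj a b (by omega) (by omega) this
    · intro p hp q hq hne
      simp only [Finset.coe_image, Set.mem_image, Finset.mem_coe, Finset.mem_range,
        Finset.coe_range, Set.mem_Iio] at hp hq
      obtain ⟨k, hk, rfl⟩ := hp
      obtain ⟨l, hl, rfl⟩ := hq
      have hkl : k ≠ l := by rintro rfl; exact hne rfl
      rcases lt_or_gt_of_ne hkl with h | h
      · left
        exact ⟨hmono k l h (by omega), hmono l (k + r) (by omega) (by omega),
          hmono (k + r) (l + r) (by omega) (by omega)⟩
      · right
        exact ⟨hmono l k h (by omega), hmono k (l + r) (by omega) (by omega),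
          hmono (l + r) (k + r) (by omega) (by omega)⟩
end

section
/- For each minimal nonface σ of Δ_{n,r-1} (a set of r pairwise crossing diagonals with all distances > r-1), the monomial ∏_{(i,j)∈σ} x_{ij} lies in the initial ideal in_≺(P_{n,r}), where ≺ is the reverse lexicographic order refining x_{ij} ≺ x_{kl} whenever d_{ij} < d_{kl}. Consequently I_{Δ_{n,r-1} * 2^{Θ_{n,r-1}}} ⊆ in_≺(P_{n,r}). -/
/-!
Let `σ` consist of `r` pairwise crossing diagonals and let `V` be their `2r` endpoints. The
principal `V × V` minor of the generic skew-symmetric matrix is a square `p ^ 2` in the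
polynomial ring (it is a square over the fraction field, and the polynomial ring is integrally
closed), so `p ∈ P`. In the Leibniz expansion of the minor, a derangement `π` of `V` contributes
`± ∏_v x_{π(v) v}`. The matching `σ`, read as an involution, contributes `∏_{e ∈ σ} x_e ^ 2`, and
any other derangement fails to swap the ends of some `u ∈ σ`. Such a `π` uses a diagonal outside
`σ` that is shorter than `u`: the other diagonals of `σ` cross `u`, so they put equally many
vertices on both sides of `u`, and a `π` using only diagonals of `σ` or long ones would map the
short side of `u` onto the long side, leaving it no choice but to swap the ends of `u`. Since `≺`
is reverse lexicographic and refines the distance, `∏_{e ∈ σ} x_e ^ 2` is the leading monomial of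
`p ^ 2`, hence `∏_{e ∈ σ} x_e` is the leading monomial of `p`.
-/

open MvPolynomial

/-- Two diagonals cross iff `a < c < b < d` or `c < a < d < b`. -/
def CrossD {n : ℕ} (e f : Diag n) : Prop :=
  (e.1.1 < f.1.1 ∧ f.1.1 < e.1.2 ∧ e.1.2 < f.1.2) ∨
  (f.1.1 < e.1.1 ∧ e.1.1 < f.1.2 ∧ f.1.2 < e.1.2)

/-- `m` is the leading monomial of `f` with respect to the term order induced by `vo`. -/
def IsLeadMon {σ : Type*} {k : Type*} [CommSemiring k] (vo : σ → σ → Prop)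
    (f : MvPolynomial σ k) (m : σ →₀ ℕ) : Prop :=
  m ∈ f.support ∧ ∀ m' ∈ f.support, m' ≠ m → TermLT vo m' m

section TermOrder

variable {σ : Type*} {vo : σ → σ → Prop}

lemma Finsupp.sum_eq_degree (m : σ →₀ ℕ) : (m.sum fun _ e => e) = m.degree := rfl

lemma Finset.exists_forall_ne_rel {α : Type*} {r : α → α → Prop} [IsStrictTotalOrder α r]
    (s : Finset α) (hs : s.Nonempty) : ∃ a ∈ s, ∀ b ∈ s, b ≠ a → r a b := by
  classical
  let _ := linearOrderOfSTO r
  obtain ⟨a, ha, hmin⟩ := s.exists_min_image id hs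
  exact ⟨a, ha, fun b hb hba => lt_of_le_of_ne (hmin b hb) (Ne.symm hba)⟩

lemma termLT_irrefl [IsStrictTotalOrder σ vo] (m : σ →₀ ℕ) : ¬ TermLT vo m m := by
  rintro (h | ⟨-, v, hv, -⟩) <;> exact lt_irrefl _ ‹_›

lemma termLT_trans [IsStrictTotalOrder σ vo] {m₁ m₂ m₃ : σ →₀ ℕ}
    (h₁₂ : TermLT vo m₁ m₂) (h₂₃ : TermLT vo m₂ m₃) : TermLT vo m₁ m₃ := by
  rcases h₁₂ with h₁₂ | ⟨e₁₂, v, hv, hag⟩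
  · rcases h₂₃ with h₂₃ | ⟨e₂₃, -⟩
    · exact Or.inl (h₁₂.trans h₂₃)
    · exact Or.inl (e₂₃ ▸ h₁₂)
  rcases h₂₃ with h₂₃ | ⟨e₂₃, v', hv', hag'⟩
  · exact Or.inl (e₁₂ ▸ h₂₃)
  refine Or.inr ⟨e₁₂.trans e₂₃, ?_⟩
  rcases trichotomous_of vo v v' with h | rfl | h
  · exact ⟨v, (hag' v h).symm ▸ hv, fun w hw => (hag w hw).trans (hag' w (_root_.trans hw h))⟩
  · exact ⟨v, hv'.trans hv, fun w hw => (hag w hw).trans (hag' w hw)⟩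
  · exact ⟨v', (hag v' h) ▸ hv', fun w hw => (hag w (_root_.trans hw h)).trans (hag' w hw)⟩

lemma termLT_trichotomous [IsStrictTotalOrder σ vo] {m m' : σ →₀ ℕ} (h : m ≠ m') :
    TermLT vo m m' ∨ TermLT vo m' m := by
  classical
  simp only [TermLT, RevLexLT, Finsupp.sum_eq_degree]
  rcases lt_trichotomy m.degree m'.degree with hd | hd | hd
  · exact Or.inl (Or.inl hd)
  swap
  · exact Or.inr (Or.inl hd)
  obtain ⟨v, hv, hmin⟩ := (m.neLocus m').exists_forall_ne_rel (r := vo)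
    (Finsupp.nonempty_neLocus_iff.mpr h)
  have hagree : ∀ w, vo w v → m w = m' w := fun w hw => by
    by_contra hne
    exact irrefl _ (_root_.trans hw (hmin w (Finsupp.mem_neLocus.mpr hne) (ne_of_irrefl hw)))
  rcases (Finsupp.mem_neLocus.mp hv).lt_or_gt with hlt | hlt
  · exact Or.inr (Or.inr ⟨hd.symm, v, hlt, fun w hw => (hagree w hw).symm⟩)
  · exact Or.inl (Or.inr ⟨hd, v, hlt, hagree⟩)

instance [IsStrictTotalOrder σ vo] : IsStrictTotalOrder (σ →₀ ℕ) (TermLT vo) where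
  trichotomous _ _ h₁ h₂ := by_contra fun h => (termLT_trichotomous h).elim h₁ h₂
  irrefl := termLT_irrefl
  trans _ _ _ := termLT_trans

lemma termLT_add_right {m₁ m₂ : σ →₀ ℕ} (h : TermLT vo m₁ m₂) (c : σ →₀ ℕ) :
    TermLT vo (m₁ + c) (m₂ + c) := by
  simp only [TermLT, RevLexLT, Finsupp.sum_eq_degree, map_add] at h ⊢
  rcases h with h | ⟨e, v, hv, hag⟩
  · exact Or.inl (by omega)
  · exact Or.inr ⟨by omega, v, by simpa using hv, fun w hw => by simp [hag w hw]⟩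

lemma termLT_add_of_le_of_lt [IsStrictTotalOrder σ vo] {a b m m' : σ →₀ ℕ}
    (ha : a = m ∨ TermLT vo a m) (hb : b = m' ∨ TermLT vo b m')
    (hne : ¬(a = m ∧ b = m')) : TermLT vo (a + b) (m + m') := by
  have hb' : ∀ c, b = m' ∨ TermLT vo b m' → ¬b = m' → TermLT vo (c + b) (c + m') :=
    fun c _ h => by simpa only [add_comm c] using termLT_add_right (hb.resolve_left h) c
  rcases ha with rfl | ha
  · exact hb' a hb fun h => hne ⟨rfl, h⟩
  rcases hb with rfl | hb
  · exact termLT_add_right ha b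
  · exact termLT_trans (termLT_add_right ha b)
      (hb' m (Or.inr hb) fun h => termLT_irrefl (vo := vo) m' (h ▸ hb))

end TermOrder

section LeadingMonomial

variable {σ k : Type*} [CommSemiring k] {vo : σ → σ → Prop} [IsStrictTotalOrder σ vo]

lemma exists_isLeadMon {f : MvPolynomial σ k} (hf : f ≠ 0) : ∃ m, IsLeadMon vo f m := by
  obtain ⟨m, hm, hmax⟩ := f.support.exists_forall_ne_rel (r := Function.swap (TermLT vo))
    (support_nonempty.mpr hf)
  exact ⟨m, hm, hmax⟩

omit [IsStrictTotalOrder σ vo] in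
lemma IsLeadMon.eq_or_termLT {f : MvPolynomial σ k} {m : σ →₀ ℕ} (h : IsLeadMon vo f m)
    {m' : σ →₀ ℕ} (hm' : m' ∈ f.support) : m' = m ∨ TermLT vo m' m :=
  (eq_or_ne m' m).imp_right (h.2 m' hm')

lemma IsLeadMon.unique {f : MvPolynomial σ k} {m m' : σ →₀ ℕ} (h : IsLeadMon vo f m)
    (h' : IsLeadMon vo f m') : m = m' := by
  by_contra hne
  exact termLT_irrefl m (termLT_trans (h'.2 m h.1 hne) (h.2 m' h'.1 (Ne.symm hne)))

lemma IsLeadMon.mul [NoZeroDivisors k] {f g : MvPolynomial σ k} {m m' : σ →₀ ℕ}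
    (hf : IsLeadMon vo f m) (hg : IsLeadMon vo g m') : IsLeadMon vo (f * g) (m + m') := by
  classical
  have hcoeff : coeff (m + m') (f * g) = coeff m f * coeff m' g := by
    rw [coeff_mul, Finset.sum_eq_single_of_mem (m, m')
      (Finset.HasAntidiagonal.mem_antidiagonal.mpr rfl)]
    rintro ⟨a, b⟩ hab hne
    by_contra h0
    have hlt := termLT_add_of_le_of_lt
      (hf.eq_or_termLT (mem_support_iff.mpr (left_ne_zero_of_mul h0)))
      (hg.eq_or_termLT (mem_support_iff.mpr (right_ne_zero_of_mul h0)))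
      fun ⟨h₁, h₂⟩ => hne (Prod.ext h₁ h₂)
    exact termLT_irrefl _ ((Finset.HasAntidiagonal.mem_antidiagonal.mp hab) ▸ hlt)
  refine ⟨mem_support_iff.mpr (hcoeff ▸ mul_ne_zero (mem_support_iff.mp hf.1)
    (mem_support_iff.mp hg.1)), fun m'' hm'' hne => ?_⟩
  obtain ⟨a, ha, b, hb, rfl⟩ := Finset.mem_add.mp (support_mul f g hm'')
  exact termLT_add_of_le_of_lt (hf.eq_or_termLT ha) (hg.eq_or_termLT hb)
    fun ⟨h₁, h₂⟩ => hne (by rw [h₁, h₂])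

lemma IsLeadMon.of_sq [NoZeroDivisors k] {p : MvPolynomial σ k} {m : σ →₀ ℕ}
    (h : IsLeadMon vo (p ^ 2) (m + m)) : IsLeadMon vo p m := by
  obtain ⟨m', hm'⟩ := exists_isLeadMon (vo := vo) (show p ≠ 0 by rintro rfl; simpa using h.1)
  have hm'' := (hm'.mul hm').unique (sq p ▸ h)
  convert hm'
  ext a
  have := DFunLike.congr_fun hm'' a
  simp only [Finsupp.add_apply] at this
  omega

lemma isLeadMon_sum_monomial {ι : Type*} (s : Finset ι) (m : ι → σ →₀ ℕ) (a : ι → k) {i₀ : ι}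
    (hi₀ : i₀ ∈ s) (ha₀ : a i₀ ≠ 0)
    (hlt : ∀ i ∈ s, i ≠ i₀ → a i ≠ 0 → TermLT vo (m i) (m i₀)) :
    IsLeadMon vo (∑ i ∈ s, monomial (m i) (a i)) (m i₀) := by
  classical
  refine ⟨?_, fun m' hm' hne => ?_⟩
  · rw [mem_support_iff, coeff_sum, Finset.sum_eq_single_of_mem i₀ hi₀, coeff_monomial,
      if_pos rfl]
    · exact ha₀
    intro i hi hne
    by_cases ha : a i = 0
    · simp [ha]
    rw [coeff_monomial, if_neg fun h => termLT_irrefl _ (h ▸ hlt i hi hne ha)]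
  rw [mem_support_iff, coeff_sum] at hm'
  obtain ⟨i, hi, hcoeff⟩ := Finset.exists_ne_zero_of_sum_ne_zero hm'
  rw [coeff_monomial] at hcoeff
  split_ifs at hcoeff with hmi
  · subst hmi
    exact hlt i hi (fun h => hne (h ▸ rfl)) hcoeff
  · exact absurd rfl hcoeff

end LeadingMonomial

lemma Matrix.det_eq_sum_monomial {ι σ R : Type*} [Fintype ι] [DecidableEq ι] [CommRing R]
    (B : Matrix ι ι (MvPolynomial σ R)) (E : ι → ι → σ →₀ ℕ) (c : ι → ι → R)
    (hB : ∀ i j, B i j = monomial (E i j) (c i j)) :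
    B.det = ∑ π : Equiv.Perm ι,
      monomial (∑ i, E (π i) i) (Equiv.Perm.sign π • ∏ i, c (π i) i) := by
  simp only [Matrix.det_apply, hB, ← monomial_sum_prod, smul_monomial]

namespace Matrix

variable {ι R : Type*}

-- The zero diagonal does not follow from skew-symmetry in characteristic `2`.
def IsAlternating [Neg R] [Zero R] (B : Matrix ι ι R) : Prop :=
  (∀ i j, B j i = -B i j) ∧ ∀ i, B i i = 0

lemma IsAlternating.submatrix [Neg R] [Zero R] {B : Matrix ι ι R} (hB : B.IsAlternating)
    {κ : Type*} (f : κ → ι) : (B.submatrix f f).IsAlternating :=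
  ⟨fun i j => hB.1 (f i) (f j), fun i => hB.2 (f i)⟩

lemma IsAlternating.map [Ring R] {S : Type*} [Ring S] {B : Matrix ι ι R} (hB : B.IsAlternating)
    (φ : R →+* S) : (B.map φ).IsAlternating :=
  ⟨fun i j => by simp [hB.1 i j], fun i => by simp [hB.2 i]⟩

-- `S` is the Schur complement of the invertible upper left `2 × 2` block.
lemma IsAlternating.exists_det_eq_sq_mul [Field R] [Fintype ι] [DecidableEq ι]
    {B : Matrix (Fin 2 ⊕ ι) (Fin 2 ⊕ ι) R} (hB : B.IsAlternating)
    (h : B (.inl 0) (.inl 1) ≠ 0) :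
    ∃ S : Matrix ι ι R, S.IsAlternating ∧ B.det = B (.inl 0) (.inl 1) ^ 2 * S.det := by
  set α := B (.inl 0) (.inl 1)
  have hcorner : B.toBlocks₁₁ = !![0, α; -α, 0] := by
    ext p q
    fin_cases p <;> fin_cases q <;> simp [toBlocks₁₁, α, hB.2, hB.1 (.inl 0) (.inl 1)]
  let N : Matrix (Fin 2) (Fin 2) R := !![0, -α⁻¹; α⁻¹, 0]
  have hNB : N * B.toBlocks₁₁ = 1 := by
    rw [hcorner]; ext p q; fin_cases p <;> fin_cases q <;> simp [N, h]
  have hBN : B.toBlocks₁₁ * N = 1 := by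
    rw [hcorner]; ext p q; fin_cases p <;> fin_cases q <;> simp [N, h]
  let _ : Invertible B.toBlocks₁₁ := ⟨N, hNB, hBN⟩
  have hinv : ⅟B.toBlocks₁₁ = N := rfl
  set S := B.toBlocks₂₂ - B.toBlocks₂₁ * N * B.toBlocks₁₂
  have hS : ∀ i j, S i j = B (.inr i) (.inr j) - α⁻¹ *
      (B (.inl 0) (.inr i) * B (.inl 1) (.inr j) - B (.inl 1) (.inr i) * B (.inl 0) (.inr j)) := by
    intro i j
    simp only [S, N, sub_apply, mul_apply, Fin.sum_univ_two, toBlocks₂₂, toBlocks₂₁, toBlocks₁₂,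
      of_apply, cons_val_zero, cons_val_one, hB.1 (.inl _) (.inr i)]
    ring
  refine ⟨S, ⟨fun i j => ?_, fun i => ?_⟩, ?_⟩
  · rw [hS, hS, hB.1 (.inr i) (.inr j)]
    ring
  · rw [hS, hB.2]
    ring
  · rw [← fromBlocks_toBlocks B, det_fromBlocks₁₁, hinv, hcorner, det_fin_two_of]
    ring

lemma IsAlternating.exists_det_eq_sq [Field R] :
    ∀ {m : ℕ} {B : Matrix (Fin m) (Fin m) R}, B.IsAlternating → ∃ c, B.det = c ^ 2
  | 0, B, _ => ⟨1, by simp⟩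
  | 1, B, hB => ⟨0, by simp [det_unique, hB.2]⟩
  | m + 2, B, hB => by
    let e₀ : Fin 2 ⊕ Fin m ≃ Fin (m + 2) := finSumFinEquiv.trans (finCongr (add_comm 2 m))
    by_cases hrow : ∀ j, B (e₀ (.inl 0)) j = 0
    · exact ⟨0, by simp [det_eq_zero_of_row_eq_zero _ hrow]⟩
    push Not at hrow
    obtain ⟨j, hj⟩ := hrow
    let e := e₀.trans (Equiv.swap (e₀ (.inl 1)) j)
    have he0 : e (.inl 0) = e₀ (.inl 0) := Equiv.swap_apply_of_ne_of_ne
      (e₀.injective.ne (by simp : (.inl 0 : Fin 2 ⊕ Fin m) ≠ .inl 1)) fun h => hj (h ▸ hB.2 _)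
    have he1 : e (.inl 1) = j := Equiv.swap_apply_left (e₀ (.inl 1)) j
    obtain ⟨S, hS, hdet⟩ := (hB.submatrix e).exists_det_eq_sq_mul (by simpa [he0, he1])
    obtain ⟨c, hc⟩ := hS.exists_det_eq_sq
    refine ⟨B (e₀ (.inl 0)) j * c, ?_⟩
    rw [← det_submatrix_equiv_self e B, hdet, hc, submatrix_apply, he0, he1]
    ring

lemma IsAlternating.exists_sq_eq_det [CommRing R] [IsDomain R] [IsIntegrallyClosed R] {m : ℕ}
    {B : Matrix (Fin m) (Fin m) R} (hB : B.IsAlternating) : ∃ p, p ^ 2 = B.det := by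
  let φ := algebraMap R (FractionRing R)
  obtain ⟨c, hc⟩ := (hB.map φ).exists_det_eq_sq
  have hc' : c ^ 2 = φ B.det := by rw [RingHom.map_det, RingHom.mapMatrix_apply, hc]
  have hint : IsIntegral R c := ⟨Polynomial.X ^ 2 - Polynomial.C B.det,
    Polynomial.monic_X_pow_sub_C _ two_ne_zero, by simp [hc', φ]⟩
  obtain ⟨p, hp⟩ := IsIntegrallyClosed.isIntegral_iff.mp hint
  exact ⟨p, IsFractionRing.injective R (FractionRing R) (by rw [map_pow, hp, hc'])⟩

end Matrix

section Polygon

variable {n : ℕ}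

def diagOf {v w : Fin n} (h : v ≠ w) : Diag n := ⟨(min v w, max v w), min_lt_max.2 h⟩

lemma diagOf_comm {v w : Fin n} (h : v ≠ w) : diagOf h.symm = diagOf h := by
  simp [diagOf, min_comm, max_comm]

lemma diagOf_eq_iff {v w : Fin n} (h : v ≠ w) {e : Diag n} :
    diagOf h = e ↔ (e.1.1 = v ∧ e.1.2 = w) ∨ (e.1.1 = w ∧ e.1.2 = v) := by
  have he := Fin.lt_def.mp e.2
  have hvw := Fin.val_ne_of_ne h
  simp only [diagOf, Subtype.ext_iff, Prod.ext_iff, Fin.ext_iff, Fin.coe_min, Fin.coe_max]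
  omega

lemma dval_diagOf {v w : Fin n} (h : v ≠ w) :
    dval n (diagOf h) = min (max (v : ℕ) w - min (v : ℕ) w) (n + min (v : ℕ) w - max (v : ℕ) w) :=
  rfl

-- The open side of `u` with fewer vertices (the inner one in case of a tie).
def shortSide (u : Diag n) (v : Fin n) : Prop :=
  if (u.1.2 : ℕ) - u.1.1 ≤ n + u.1.1 - u.1.2 then (u.1.1 : ℕ) < v ∧ (v : ℕ) < u.1.2
  else (v : ℕ) < u.1.1 ∨ (u.1.2 : ℕ) < v

def longSide (u : Diag n) (v : Fin n) : Prop :=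
  if (u.1.2 : ℕ) - u.1.1 ≤ n + u.1.1 - u.1.2 then (v : ℕ) < u.1.1 ∨ (u.1.2 : ℕ) < v
  else (u.1.1 : ℕ) < v ∧ (v : ℕ) < u.1.2

lemma shortSide_or_longSide {u : Diag n} {v : Fin n} (h₁ : v ≠ u.1.1) (h₂ : v ≠ u.1.2) :
    shortSide u v ∨ longSide u v := by
  have := Fin.val_ne_of_ne h₁
  have := Fin.val_ne_of_ne h₂
  unfold shortSide longSide
  split_ifs <;> omega

lemma not_shortSide_and_longSide (u : Diag n) (v : Fin n) : ¬(shortSide u v ∧ longSide u v) := by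
  unfold shortSide longSide
  split_ifs <;> omega

lemma ne_endpoints_of_shortSide {u : Diag n} {v : Fin n} (h : shortSide u v) :
    v ≠ u.1.1 ∧ v ≠ u.1.2 := by
  unfold shortSide at h
  split_ifs at h <;> exact ⟨fun h' => by subst h'; omega, fun h' => by subst h'; omega⟩

lemma ne_endpoints_of_longSide {u : Diag n} {v : Fin n} (h : longSide u v) :
    v ≠ u.1.1 ∧ v ≠ u.1.2 := by
  unfold longSide at h
  split_ifs at h <;> exact ⟨fun h' => by subst h'; omega, fun h' => by subst h'; omega⟩

lemma dval_diagOf_lt {u : Diag n} {v w : Fin n} (h : v ≠ w) (hv : shortSide u v)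
    (hw : ¬longSide u w) : dval n (diagOf h) < dval n u := by
  have := Fin.lt_def.mp u.2
  have := u.1.2.isLt
  have := v.isLt
  have := w.isLt
  have := Fin.val_ne_of_ne h
  rw [dval_diagOf, dval]
  unfold shortSide longSide at *
  split_ifs at * <;> omega

lemma CrossD.sides {u e : Diag n} (h : CrossD u e) :
    (shortSide u e.1.1 ∧ longSide u e.1.2) ∨ (longSide u e.1.1 ∧ shortSide u e.1.2) := by
  unfold CrossD at h
  simp only [Fin.lt_def] at h
  unfold shortSide longSide
  split_ifs <;> omega

end Polygon

section Matching

variable {n : ℕ} {σ : Finset (Diag n)}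

variable (σ) in
def endpoints : Finset (Fin n) := σ.biUnion fun e => {e.1.1, e.1.2}

lemma mem_endpoints {v : Fin n} : v ∈ endpoints σ ↔ ∃ e ∈ σ, v = e.1.1 ∨ v = e.1.2 := by
  simp [endpoints]

lemma eq_of_mem_of_shared_endpoint (hσ : (σ : Set (Diag n)).Pairwise CrossD) {e f : Diag n}
    (he : e ∈ σ) (hf : f ∈ σ) {v : Fin n} (hve : v = e.1.1 ∨ v = e.1.2)
    (hvf : v = f.1.1 ∨ v = f.1.2) : e = f := by
  by_contra hne
  have := hσ he hf hne
  unfold CrossD at this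
  rcases hve with rfl | rfl <;> rcases hvf with h | h <;> rw [h] at this <;>
    simp only [Fin.lt_def] at this <;> omega

lemma pairwiseDisjoint_endpoints (hσ : (σ : Set (Diag n)).Pairwise CrossD) :
    (σ : Set (Diag n)).PairwiseDisjoint fun e => ({e.1.1, e.1.2} : Finset (Fin n)) := by
  intro e he f hf hne
  simp only [Function.onFun, Finset.disjoint_left, Finset.mem_insert, Finset.mem_singleton]
  exact fun v hve hvf => hne (eq_of_mem_of_shared_endpoint hσ he hf hve hvf)

lemma card_endpoints (hσ : (σ : Set (Diag n)).Pairwise CrossD) :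
    (endpoints σ).card = 2 * σ.card := by
  rw [endpoints, Finset.card_biUnion (pairwiseDisjoint_endpoints hσ),
    Finset.sum_const_nat fun e _ => Finset.card_pair e.2.ne, mul_comm]

variable (σ) in
noncomputable def partner (v : Fin n) : Fin n :=
  if h : ∃ e ∈ σ, v = e.1.1 ∨ v = e.1.2 then
    if v = h.choose.1.1 then h.choose.1.2 else h.choose.1.1
  else v

lemma partner_of_mem (hσ : (σ : Set (Diag n)).Pairwise CrossD) {e : Diag n} (he : e ∈ σ) :
    partner σ e.1.1 = e.1.2 ∧ partner σ e.1.2 = e.1.1 := by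
  have key : ∀ {v}, (hv : v = e.1.1 ∨ v = e.1.2) →
      partner σ v = if v = e.1.1 then e.1.2 else e.1.1 := fun {v} hv => by
    have h : ∃ f ∈ σ, v = f.1.1 ∨ v = f.1.2 := ⟨e, he, hv⟩
    rw [partner, dif_pos h, eq_of_mem_of_shared_endpoint hσ h.choose_spec.1 he h.choose_spec.2 hv]
  rw [key (Or.inl rfl), key (Or.inr rfl), if_pos rfl, if_neg e.2.ne']
  exact ⟨rfl, rfl⟩

lemma exists_mem_partner (hσ : (σ : Set (Diag n)).Pairwise CrossD) {v : Fin n}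
    (hv : v ∈ endpoints σ) :
    ∃ e ∈ σ, (v = e.1.1 ∧ partner σ v = e.1.2) ∨ (v = e.1.2 ∧ partner σ v = e.1.1) := by
  obtain ⟨e, he, rfl | rfl⟩ := mem_endpoints.mp hv
  · exact ⟨e, he, Or.inl ⟨rfl, (partner_of_mem hσ he).1⟩⟩
  · exact ⟨e, he, Or.inr ⟨rfl, (partner_of_mem hσ he).2⟩⟩

lemma partner_involutive (hσ : (σ : Set (Diag n)).Pairwise CrossD) :
    Function.Involutive (partner σ) := by
  intro v
  by_cases hv : v ∈ endpoints σ
  · obtain ⟨e, he, ⟨rfl, h⟩ | ⟨rfl, h⟩⟩ := exists_mem_partner hσ hv <;> rw [h]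
    exacts [(partner_of_mem hσ he).2, (partner_of_mem hσ he).1]
  · have h : partner σ v = v := dif_neg (mem_endpoints.not.mp hv)
    rw [h, h]

lemma partner_ne (hσ : (σ : Set (Diag n)).Pairwise CrossD) {v : Fin n}
    (hv : v ∈ endpoints σ) : partner σ v ≠ v := by
  obtain ⟨e, he, ⟨rfl, h⟩ | ⟨rfl, h⟩⟩ := exists_mem_partner hσ hv <;> rw [h]
  exacts [e.2.ne', e.2.ne]

lemma partner_mem_endpoints_iff (hσ : (σ : Set (Diag n)).Pairwise CrossD) {v : Fin n} :
    partner σ v ∈ endpoints σ ↔ v ∈ endpoints σ := by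
  suffices h : ∀ {w}, w ∈ endpoints σ → partner σ w ∈ endpoints σ from
    ⟨fun hv => partner_involutive hσ v ▸ h hv, h⟩
  intro w hw
  obtain ⟨e, he, ⟨-, h⟩ | ⟨-, h⟩⟩ := exists_mem_partner hσ hw <;>
    exact mem_endpoints.mpr ⟨e, he, by simp [h]⟩

lemma partner_eq_of_diagOf_mem (hσ : (σ : Set (Diag n)).Pairwise CrossD) {v w : Fin n}
    (h : v ≠ w) (hmem : diagOf h ∈ σ) : partner σ v = w := by
  rcases (diagOf_eq_iff h).mp rfl with ⟨h₁, h₂⟩ | ⟨h₁, h₂⟩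
  · rw [← h₁, (partner_of_mem hσ hmem).1, h₂]
  · rw [← h₂, (partner_of_mem hσ hmem).2, h₁]

variable (σ) in
noncomputable def partnerPerm (hσ : (σ : Set (Diag n)).Pairwise CrossD) :
    Equiv.Perm (endpoints σ) :=
  (partner_involutive hσ).toPerm.subtypePerm fun _ => partner_mem_endpoints_iff hσ

@[simp]
lemma coe_partnerPerm (hσ : (σ : Set (Diag n)).Pairwise CrossD) (x : endpoints σ) :
    (partnerPerm σ hσ x : Fin n) = partner σ x :=
  rfl

lemma partnerPerm_apply_ne (hσ : (σ : Set (Diag n)).Pairwise CrossD) (x : endpoints σ) :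
    partnerPerm σ hσ x ≠ x :=
  fun h => partner_ne hσ x.2 (congrArg Subtype.val h)

lemma partner_on_opposite_side (hσ : (σ : Set (Diag n)).Pairwise CrossD) {u : Diag n} (hu : u ∈ σ)
    {v : Fin n} (hv : v ∈ endpoints σ) (h₁ : v ≠ u.1.1) (h₂ : v ≠ u.1.2) :
    (shortSide u v ∧ longSide u (partner σ v)) ∨ (longSide u v ∧ shortSide u (partner σ v)) := by
  obtain ⟨e, he, ⟨rfl, h⟩ | ⟨rfl, h⟩⟩ := exists_mem_partner hσ hv <;> rw [h]
  · have hne : u ≠ e := by rintro rfl; exact h₁ rfl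
    exact (hσ hu he hne).sides
  · have hne : u ≠ e := by rintro rfl; exact h₂ rfl
    have := (hσ hu he hne).sides
    tauto

end Matching

section Leibniz

variable {n : ℕ}

def IsGenericSkewMatrix {k : Type*} [CommRing k]
    (A : Matrix (Fin n) (Fin n) (MvPolynomial (Diag n) k)) : Prop :=
  ∀ i j : Fin n, A i j =
    if h : i < j then X ⟨(i, j), h⟩
    else if h' : j < i then - X ⟨(j, i), h'⟩
    else 0

noncomputable def edgeExp (v w : Fin n) : Diag n →₀ ℕ :=
  if h : v ≠ w then Finsupp.single (diagOf h) 1 else 0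

lemma edgeExp_of_ne {v w : Fin n} (h : v ≠ w) : edgeExp v w = Finsupp.single (diagOf h) 1 :=
  dif_pos h

def skewSign {k : Type*} [Ring k] (v w : Fin n) : k :=
  if v < w then 1 else if w < v then -1 else 0

lemma skewSign_ne_zero {k : Type*} [Ring k] [Nontrivial k] {v w : Fin n} (h : v ≠ w) :
    (skewSign v w : k) ≠ 0 := by
  rcases h.lt_or_gt with h | h
  · simp [skewSign, h]
  · simp [skewSign, h, h.not_gt]

namespace IsGenericSkewMatrix

variable {k : Type*} [CommRing k] {A : Matrix (Fin n) (Fin n) (MvPolynomial (Diag n) k)}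

lemma isAlternating (hA : IsGenericSkewMatrix A) : A.IsAlternating := by
  unfold IsGenericSkewMatrix at hA
  refine ⟨fun i j => ?_, fun i => by simp [hA]⟩
  rcases lt_trichotomy i j with h | rfl | h
  · simp [hA, h, h.not_gt]
  · simp [hA]
  · simp [hA, h, h.not_gt]

lemma apply_eq_monomial (hA : IsGenericSkewMatrix A) (v w : Fin n) :
    A v w = monomial (edgeExp v w) (skewSign v w) := by
  unfold IsGenericSkewMatrix at hA
  rcases lt_trichotomy v w with h | rfl | h
  · rw [hA, dif_pos h, edgeExp_of_ne h.ne, skewSign, if_pos h,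
      (diagOf_eq_iff (e := ⟨(v, w), h⟩) h.ne).mpr (Or.inl ⟨rfl, rfl⟩)]
    rfl
  · simp [hA, edgeExp, skewSign]
  · rw [hA, dif_neg h.not_gt, dif_pos h, edgeExp_of_ne h.ne', skewSign, if_neg h.not_gt, if_pos h,
      (diagOf_eq_iff (e := ⟨(w, v), h⟩) h.ne').mpr (Or.inr ⟨rfl, rfl⟩), X, ← map_neg]

end IsGenericSkewMatrix

variable {V : Finset (Fin n)}

noncomputable def termExp (π : Equiv.Perm V) : Diag n →₀ ℕ := ∑ x, edgeExp (π x) x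

lemma one_le_termExp (π : Equiv.Perm V) (x : V) (h : (π x : Fin n) ≠ x) :
    1 ≤ termExp π (diagOf h) := by
  calc 1 = edgeExp (π x) x (diagOf h) := by simp [edgeExp_of_ne h]
    _ ≤ termExp π (diagOf h) := by
      rw [termExp, Finsupp.finsetSum_apply]
      exact Finset.single_le_sum (f := fun y => edgeExp (π y) y (diagOf h))
        (fun _ _ => Nat.zero_le _) (Finset.mem_univ x)

lemma two_le_termExp (π : Equiv.Perm V) {a b : V} (hab : (a : Fin n) ≠ b) (ha : π a = b)
    (hb : π b = a) : 2 ≤ termExp π (diagOf hab) := by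
  classical
  calc 2 = ∑ x ∈ {a, b}, edgeExp (π x) x (diagOf hab) := by
        rw [Finset.sum_pair fun h => hab (congrArg _ h), ha, hb, edgeExp_of_ne hab.symm,
          edgeExp_of_ne hab, diagOf_comm hab]
        simp
    _ ≤ termExp π (diagOf hab) := by
      rw [termExp, Finsupp.finsetSum_apply]
      exact Finset.sum_le_sum_of_subset (Finset.subset_univ _)

lemma degree_termExp (π : Equiv.Perm V) (hπ : ∀ x, π x ≠ x) : (termExp π).degree = V.card := by
  simp [termExp, edgeExp_of_ne (Subtype.coe_injective.ne (hπ _))]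

end Leibniz

lemma Equiv.Perm.apply_eq_of_mapsTo_of_card_le {α : Type*} [DecidableEq α] (π : Equiv.Perm α)
    {a b : α} {S L : Finset α} (hcover : ∀ x, x = a ∨ x = b ∨ x ∈ S ∨ x ∈ L)
    (hcard : L.card ≤ S.card) (hS : ∀ x ∈ S, π x ∈ L) (ha : a ∉ S) (hπa : π a ∉ S)
    (hfix : π a ≠ a) : π a = b := by
  have himage : S.image π = L := Finset.eq_of_subset_of_card_le
    (Finset.image_subset_iff.mpr hS) (by rwa [Finset.card_image_of_injective _ π.injective])
  rcases hcover (π a) with h | h | h | h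
  · exact absurd h hfix
  · exact h
  · exact absurd h hπa
  · obtain ⟨x, hx, hxa⟩ := Finset.mem_image.mp (himage ▸ h)
    exact absurd (π.injective hxa ▸ hx) ha

section Derangement

variable {n : ℕ} {σ : Finset (Diag n)}

/-- A derangement `π` using no diagonal outside `σ` shorter than `u` maps the endpoints on the
short side of `u` into, hence onto, the long side (the diagonals of `σ` pair the two sides up), so
it has no choice but to swap the ends of `u`. -/
theorem apply_eq_of_forall_dval_le (hσ : (σ : Set (Diag n)).Pairwise CrossD) {u : Diag n}
    (hu : u ∈ σ) (π : Equiv.Perm (endpoints σ)) (hπ : ∀ x, π x ≠ x)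
    (hshort : ∀ x (h : (π x : Fin n) ≠ x), diagOf h ∉ σ → dval n u ≤ dval n (diagOf h))
    {a b : endpoints σ}
    (hab : (a : Fin n) = u.1.1 ∧ (b : Fin n) = u.1.2 ∨ (a : Fin n) = u.1.2 ∧ (b : Fin n) = u.1.1) :
    π a = b := by
  classical
  have hpartner : ∀ x (h : (π x : Fin n) ≠ x), dval n (diagOf h) < dval n u →
      partner σ x = π x := fun x h hlt => by
    by_contra hne
    refine (hshort x h fun hm => hne ?_).not_gt hlt
    exact partner_eq_of_diagOf_mem hσ h.symm (by rwa [diagOf_comm])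
  have hpab : partner σ a = b := by
    rcases hab with ⟨ha, hb⟩ | ⟨ha, hb⟩ <;> rw [ha, hb]
    exacts [(partner_of_mem hσ hu).1, (partner_of_mem hσ hu).2]
  have hab' : ∀ v : Fin n, v ≠ u.1.1 ∧ v ≠ u.1.2 ↔ v ≠ a ∧ v ≠ b := by
    rcases hab with ⟨ha, hb⟩ | ⟨ha, hb⟩ <;> rw [ha, hb] <;> tauto
  refine π.apply_eq_of_mapsTo_of_card_le (S := {x | shortSide u x}) (L := {x | longSide u x})
    (fun x => ?_) ?_ (fun x hx => ?_) (fun ha => ?_) (fun hπa => ?_) (hπ a)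
  · by_cases hxa : x = a
    · exact Or.inl hxa
    by_cases hxb : x = b
    · exact Or.inr (Or.inl hxb)
    have hx := (hab' x).mpr ⟨Subtype.coe_injective.ne hxa, Subtype.coe_injective.ne hxb⟩
    right; right
    simpa using shortSide_or_longSide hx.1 hx.2
  · refine Finset.card_le_card_of_injOn (partnerPerm σ hσ) (fun x hx => ?_)
      (partnerPerm σ hσ).injective.injOn
    simp only [Finset.coe_filter, Finset.mem_univ, true_and, Set.mem_ofPred_eq,
      coe_partnerPerm] at hx ⊢
    have hne := ne_endpoints_of_longSide hx
    have := not_shortSide_and_longSide u x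
    have := partner_on_opposite_side hσ hu x.2 hne.1 hne.2
    tauto
  · simp only [Finset.mem_filter, Finset.mem_univ, true_and] at hx ⊢
    by_contra hL
    have hx' := ne_endpoints_of_shortSide hx
    have hxπ : (x : Fin n) ≠ π x := Subtype.coe_injective.ne (hπ x).symm
    have hpx := hpartner x hxπ.symm (by rw [diagOf_comm]; exact dval_diagOf_lt hxπ hx hL)
    have := not_shortSide_and_longSide u x
    have := partner_on_opposite_side hσ hu x.2 hx'.1 hx'.2
    rw [hpx] at this
    tauto
  · exact ((hab' a).mp (ne_endpoints_of_shortSide (by simpa using ha))).1 rfl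
  · have hshortπa : shortSide u (π a) := by simpa using hπa
    have hπa' : (π a : Fin n) ≠ a := Subtype.coe_injective.ne (hπ a)
    have hlong : ¬longSide u a := fun h => ((hab' a).mp (ne_endpoints_of_longSide h)).1 rfl
    have hpa := hpartner a hπa' (dval_diagOf_lt hπa' hshortπa hlong)
    exact ((hab' _).mp (ne_endpoints_of_shortSide hshortπa)).2 (hpa ▸ hpab)

lemma termExp_partnerPerm (hσ : (σ : Set (Diag n)).Pairwise CrossD) :
    termExp (partnerPerm σ hσ) = ∑ e ∈ σ, Finsupp.single e 1 + ∑ e ∈ σ, Finsupp.single e 1 := by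
  classical
  rw [← Finset.sum_add_distrib, termExp]
  simp only [coe_partnerPerm]
  rw [Finset.sum_coe_sort (endpoints σ) fun v => edgeExp (partner σ v) v, endpoints,
    Finset.sum_biUnion (pairwiseDisjoint_endpoints hσ)]
  refine Finset.sum_congr rfl fun e he => ?_
  rw [Finset.sum_pair e.2.ne, (partner_of_mem hσ he).1, (partner_of_mem hσ he).2,
    edgeExp_of_ne e.2.ne', edgeExp_of_ne e.2.ne, diagOf_comm e.2.ne,
    (diagOf_eq_iff e.2.ne).mpr (Or.inl ⟨rfl, rfl⟩)]

lemma termExp_partnerPerm_apply (hσ : (σ : Set (Diag n)).Pairwise CrossD) (e : Diag n) :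
    termExp (partnerPerm σ hσ) e = if e ∈ σ then 2 else 0 := by
  classical
  rw [termExp_partnerPerm]
  split_ifs <;> simp [Finsupp.single_apply, *]

lemma exists_diagOf_notMem_of_ne_partnerPerm (hσ : (σ : Set (Diag n)).Pairwise CrossD)
    {π : Equiv.Perm (endpoints σ)} (hπ : ∀ x, π x ≠ x) (hne : π ≠ partnerPerm σ hσ) :
    ∃ x, ∃ h : (π x : Fin n) ≠ x, diagOf h ∉ σ := by
  obtain ⟨x, hx⟩ : ∃ x, π x ≠ partnerPerm σ hσ x := not_forall.mp (mt Equiv.ext hne)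
  refine ⟨x, Subtype.coe_injective.ne (hπ x), fun hm => hx (Subtype.ext ?_)⟩
  rw [coe_partnerPerm, partner_eq_of_diagOf_mem hσ _ (by rwa [diagOf_comm])]

variable {vo : Diag n → Diag n → Prop} [IsStrictTotalOrder (Diag n) vo]

theorem termLT_termExp_partnerPerm (hcompat : ∀ e f : Diag n, dval n e < dval n f → vo e f)
    (hσ : (σ : Set (Diag n)).Pairwise CrossD) (π : Equiv.Perm (endpoints σ)) (hπ : ∀ x, π x ≠ x)
    (hne : π ≠ partnerPerm σ hσ) : TermLT vo (termExp π) (termExp (partnerPerm σ hσ)) := by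
  classical
  have hdeg : (termExp π).degree = (termExp (partnerPerm σ hσ)).degree := by
    rw [degree_termExp π hπ, degree_termExp _ (partnerPerm_apply_ne hσ)]
  have hval := termExp_partnerPerm_apply hσ
  have hout : ∀ x (h : (π x : Fin n) ≠ x), diagOf h ∉ σ →
      termExp (partnerPerm σ hσ) (diagOf h) < termExp π (diagOf h) := fun x h hm => by
    rw [hval, if_neg hm]
    exact one_le_termExp π x h
  refine (termLT_trichotomous fun heq => ?_).resolve_right ?_
  · obtain ⟨x, h, hm⟩ := exists_diagOf_notMem_of_ne_partnerPerm hσ hπ hne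
    exact (hout x h hm).ne (heq ▸ rfl)
  rintro (hlt | ⟨-, u, hu, hagree⟩)
  · exact hlt.ne hdeg.symm
  -- `π` uses every diagonal that is smaller than `u` in `vo` exactly as often as the matching
  -- does, in particular no diagonal outside `σ` shorter than `u`; so it swaps the ends of `u`,
  -- which makes the exponent of `u` in `termExp π` at least `2`, against `hu`.
  have huσ : u ∈ σ := by
    by_contra h
    rw [hval, if_neg h] at hu
    exact Nat.not_lt_zero _ hu
  rw [hval, if_pos huσ] at hu
  have hshort : ∀ x (h : (π x : Fin n) ≠ x), diagOf h ∉ σ → dval n u ≤ dval n (diagOf h) :=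
    fun x h hm => not_lt.mp fun hlt => (hout x h hm).ne (hagree _ (hcompat _ _ hlt))
  let a : endpoints σ := ⟨u.1.1, mem_endpoints.mpr ⟨u, huσ, Or.inl rfl⟩⟩
  let b : endpoints σ := ⟨u.1.2, mem_endpoints.mpr ⟨u, huσ, Or.inr rfl⟩⟩
  have hswap := two_le_termExp π (a := a) (b := b) u.2.ne
    (apply_eq_of_forall_dval_le hσ huσ π hπ hshort (Or.inl ⟨rfl, rfl⟩))
    (apply_eq_of_forall_dval_le hσ huσ π hπ hshort (Or.inr ⟨rfl, rfl⟩))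
  rw [(diagOf_eq_iff u.2.ne).mpr (Or.inl ⟨rfl, rfl⟩)] at hswap
  omega

theorem isLeadMon_det_submatrix_endpoints {k : Type*} [CommRing k] [IsDomain k]
    (hcompat : ∀ e f : Diag n, dval n e < dval n f → vo e f)
    {A : Matrix (Fin n) (Fin n) (MvPolynomial (Diag n) k)} (hA : IsGenericSkewMatrix A)
    (hσ : (σ : Set (Diag n)).Pairwise CrossD) :
    IsLeadMon vo (A.submatrix ((↑) : endpoints σ → Fin n) (↑)).det
      (termExp (partnerPerm σ hσ)) := by
  classical
  rw [Matrix.det_eq_sum_monomial _ (fun x y => edgeExp x.1 y.1) (fun x y => skewSign x.1 y.1)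
    fun x y => hA.apply_eq_monomial _ _]
  refine isLeadMon_sum_monomial _ termExp _ (Finset.mem_univ (partnerPerm σ hσ)) ?_
    fun π _ hne ha => termLT_termExp_partnerPerm hcompat hσ π (fun x hx => ha ?_) hne
  · rw [smul_ne_zero_iff_ne, Finset.prod_ne_zero_iff]
    exact fun x _ => skewSign_ne_zero (Subtype.coe_injective.ne (partnerPerm_apply_ne hσ x))
  · rw [Finset.prod_eq_zero (Finset.mem_univ x) (by simp [hx, skewSign]), smul_zero]

theorem exists_pfaffian_isLeadMon {k : Type*} [Field k]
    (hcompat : ∀ e f : Diag n, dval n e < dval n f → vo e f)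
    {A : Matrix (Fin n) (Fin n) (MvPolynomial (Diag n) k)} (hA : IsGenericSkewMatrix A)
    (hσ : (σ : Set (Diag n)).Pairwise CrossD) {r : ℕ} (hcard : σ.card = r) :
    ∃ j : Fin (2 * r) → Fin n, StrictMono j ∧ ∃ p, p ^ 2 = (A.submatrix j j).det ∧
      IsLeadMon vo p (∑ e ∈ σ, Finsupp.single e 1) := by
  have hV : (endpoints σ).card = 2 * r := by rw [card_endpoints hσ, hcard]
  let j := (endpoints σ).orderEmbOfFin hV
  obtain ⟨p, hp⟩ := (hA.isAlternating.submatrix j).exists_sq_eq_det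
  refine ⟨j, j.strictMono, p, hp, IsLeadMon.of_sq ?_⟩
  have hlead := isLeadMon_det_submatrix_endpoints hcompat hA hσ
  rw [← Matrix.det_submatrix_equiv_self ((endpoints σ).orderIsoOfFin hV).toEquiv,
    termExp_partnerPerm] at hlead
  rw [hp]
  exact hlead

end Derangement

theorem stmt17_general (k : Type) [Field k] (n r : ℕ)
    (vo : Diag n → Diag n → Prop) (hvo : IsStrictTotalOrder (Diag n) vo)
    (hcompat : ∀ e f : Diag n, dval n e < dval n f → vo e f)
    (A : Matrix (Fin n) (Fin n) (MvPolynomial (Diag n) k))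
    (hA : ∀ i j : Fin n, A i j =
      if h : i < j then X ⟨(i, j), h⟩
      else if h' : j < i then - X ⟨(j, i), h'⟩
      else 0)
    (P : Ideal (MvPolynomial (Diag n) k))
    (hP : P = Ideal.span {p | ∃ j : Fin (2 * r) → Fin n, StrictMono j ∧
      p ^ 2 = (A.submatrix j j).det})
    (inP : Ideal (MvPolynomial (Diag n) k))
    (hinP : inP = Ideal.span {g | ∃ f ∈ P, ∃ m : Diag n →₀ ℕ,
      IsLeadMon vo f m ∧ g = monomial m (1 : k)}) :
    (∀ σ : Finset (Diag n), σ.card = r → (∀ e ∈ σ, r - 1 < dval n e) →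
      (σ : Set (Diag n)).Pairwise CrossD →
      monomial (∑ e ∈ σ, Finsupp.single e 1) (1 : k) ∈ inP) ∧
    Ideal.span {g : MvPolynomial (Diag n) k | ∃ s : Finset (Diag n),
        (∃ τ ⊆ s, τ.card = r ∧ (∀ e ∈ τ, r - 1 < dval n e) ∧
          (τ : Set (Diag n)).Pairwise CrossD) ∧
        g = ∏ e ∈ s, X e} ≤ inP := by
  have hmain : ∀ σ : Finset (Diag n), σ.card = r → (σ : Set (Diag n)).Pairwise CrossD →
      monomial (∑ e ∈ σ, Finsupp.single e 1) (1 : k) ∈ inP := by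
    intro σ hcard hσ
    obtain ⟨j, hj, p, hp, hlead⟩ := exists_pfaffian_isLeadMon hcompat hA hσ hcard
    rw [hinP]
    exact Ideal.subset_span ⟨p, hP ▸ Ideal.subset_span ⟨j, hj, hp⟩, _, hlead, rfl⟩
  refine ⟨fun σ hcard _ hσ => hmain σ hcard hσ, Ideal.span_le.mpr ?_⟩
  rintro g ⟨s, ⟨τ, hτs, hcard, -, hτ⟩, rfl⟩
  rw [SetLike.mem_coe, ← Finset.prod_sdiff hτs]
  refine Ideal.mul_mem_left _ _ ?_
  have hτ := hmain τ hcard hτ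
  rw [monomial_sum_one] at hτ
  exact hτ

/-- For each minimal nonface `σ` of `Δ_{n,r-1}` (a set of `r` pairwise crossing diagonals,
all of cyclic distance `> r - 1`), the monomial `∏_{(i,j) ∈ σ} x_{ij}` lies in the initial
ideal `in_≺(P_{n,r})` of the Pfaffian ideal with respect to the (degree) reverse
lexicographic order `≺` refining `x_{ij} ≺ x_{kl}` whenever `d_{ij} < d_{kl}`.
Consequently, the Stanley-Reisner ideal of the join `Δ_{n,r-1} * 2^{Θ_{n,r-1}}` is
contained in `in_≺(P_{n,r})`. -/
theorem stmt17 (k : Type) [Field k] (n r : ℕ) (hr : 1 ≤ r) (hrn : 2 * r ≤ n)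
    (vo : Diag n → Diag n → Prop) (hvo : IsStrictTotalOrder (Diag n) vo)
    (hcompat : ∀ e f : Diag n, dval n e < dval n f → vo e f)
    (A : Matrix (Fin n) (Fin n) (MvPolynomial (Diag n) k))
    (hA : ∀ i j : Fin n, A i j =
      if h : i < j then X ⟨(i, j), h⟩
      else if h' : j < i then - X ⟨(j, i), h'⟩
      else 0)
    (P : Ideal (MvPolynomial (Diag n) k))
    (hP : P = Ideal.span {p | ∃ j : Fin (2 * r) → Fin n, StrictMono j ∧
      p ^ 2 = (A.submatrix j j).det})
    (inP : Ideal (MvPolynomial (Diag n) k))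
    (hinP : inP = Ideal.span {g | ∃ f ∈ P, ∃ m : Diag n →₀ ℕ,
      IsLeadMon vo f m ∧ g = monomial m (1 : k)}) :
    (∀ σ : Finset (Diag n), σ.card = r → (∀ e ∈ σ, r - 1 < dval n e) →
      (σ : Set (Diag n)).Pairwise CrossD →
      monomial (∑ e ∈ σ, Finsupp.single e 1) (1 : k) ∈ inP) ∧
    Ideal.span {g : MvPolynomial (Diag n) k | ∃ s : Finset (Diag n),
        (∃ τ ⊆ s, τ.card = r ∧ (∀ e ∈ τ, r - 1 < dval n e) ∧
          (τ : Set (Diag n)).Pairwise CrossD) ∧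
        g = ∏ e ∈ s, X e} ≤ inP :=
  stmt17_general k n r vo hvo hcompat A hA P hP inP hinP
end
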